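/- Let Q : ℝⁿ × ℝᵐ ⇉ ℝᵐ have closed graph and have the SCD property at ((x, y), z) ∈ gph Q, and let f : ℝⁿ × ℝᵐ → ℝᵐ be continuously differentiable. Then F := f + Q has the SCD property at ((x, y), f(x, y) + z), and 𝒮F((x,y), f(x,y)+z) = { [[I_{n+m}, 0], [∇f(x,y), I_m]] · L : L ∈ 𝒮Q((x,y), z) }, and 𝒮*F((x,y), f(x,y)+z) = { [[I_m, 0], [∇f(x,y)ᵀ, I_{n+m}]] · L* : L* ∈ 𝒮*Q((x,y), z) }. -/

import Mathlib

open Filter Topology Set Module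

/-- Join a pair into a Euclidean space on a sum index type. -/
noncomputable def emb {α β : Type*} [Fintype α] [Fintype β]
    (x : EuclideanSpace ℝ α) (y : EuclideanSpace ℝ β) : EuclideanSpace ℝ (α ⊕ β) :=
  WithLp.toLp 2 (fun s => Sum.elim (fun i => x i) (fun j => y j) s)

/-- Orthogonal projection onto a subspace as an endomap. -/
noncomputable def projCLM {ι : Type*} [Fintype ι] (L : Submodule ℝ (EuclideanSpace ℝ ι)) :
    EuclideanSpace ℝ ι →L[ℝ] EuclideanSpace ℝ ι :=
  L.subtypeL.comp (Submodule.orthogonalProjectionOnto L)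

/-- The projection metric `d(L₁,L₂) = ‖P₁ - P₂‖` on subspaces. -/
noncomputable def dZ {ι : Type*} [Fintype ι] (L₁ L₂ : Submodule ℝ (EuclideanSpace ℝ ι)) : ℝ :=
  ‖projCLM L₁ - projCLM L₂‖

/-- The SC derivative of a set `S` (a graph) at `w ∈ S`, for dimension `d`: all `d`-dimensional
subspaces arising as limits (in the projection metric) of tangent spaces at points of `S` where
`S` is graphically smooth of dimension `d`. -/
noncomputable def SCderivSet {ι : Type*} [Fintype ι] (S : Set (EuclideanSpace ℝ ι))
    (w : EuclideanSpace ℝ ι) (d : ℕ) : Set (Submodule ℝ (EuclideanSpace ℝ ι)) :=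
  {L | finrank ℝ L = d ∧
    ∃ (wk : ℕ → EuclideanSpace ℝ ι) (Lk : ℕ → Submodule ℝ (EuclideanSpace ℝ ι)),
      (∀ k, wk k ∈ S ∧ finrank ℝ (Lk k) = d ∧
        ((Lk k : Set (EuclideanSpace ℝ ι)) = tangentConeAt ℝ S (wk k))) ∧
      Tendsto wk atTop (𝓝 w) ∧ Tendsto (fun k => dZ (Lk k) L) atTop (𝓝 0)}

/-- The linear map `(a, b) ↦ (b, -a)`, used to define the adjoint subspace. -/
noncomputable def swapNeg (α β : Type*) [Fintype α] [Fintype β] :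
    EuclideanSpace ℝ (β ⊕ α) →ₗ[ℝ] EuclideanSpace ℝ (α ⊕ β) where
  toFun w := WithLp.toLp 2 (fun s => Sum.elim (fun i : α => w (Sum.inr i)) (fun j : β => -(w (Sum.inl j))) s)
  map_add' u v := by
    ext s
    cases s with
    | inl i => show (u + v) (Sum.inr i) = u (Sum.inr i) + v (Sum.inr i); rfl
    | inr j =>
        show -((u + v) (Sum.inl j)) = -(u (Sum.inl j)) + -(v (Sum.inl j))
        show -((u (Sum.inl j)) + (v (Sum.inl j))) = _
        ring
  map_smul' c u := by
    ext s
    cases s with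
    | inl i => rfl
    | inr j =>
        show -((c • u) (Sum.inl j)) = c * -(u (Sum.inl j))
        show -(c * (u (Sum.inl j))) = c * -(u (Sum.inl j))
        ring

/-- The adjoint subspace `L* = {(-v*, u*) | (u*, v*) ∈ L^⊥}`. -/
noncomputable def adjSub {α β : Type*} [Fintype α] [Fintype β]
    (L : Submodule ℝ (EuclideanSpace ℝ (α ⊕ β))) : Submodule ℝ (EuclideanSpace ℝ (β ⊕ α)) :=
  Lᗮ.comap (swapNeg α β)

noncomputable def p1 {α β : Type*} [Fintype α] [Fintype β]
    (w : EuclideanSpace ℝ (α ⊕ β)) : EuclideanSpace ℝ α := WithLp.toLp 2 (fun i => w (Sum.inl i))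

noncomputable def p2 {α β : Type*} [Fintype α] [Fintype β]
    (w : EuclideanSpace ℝ (α ⊕ β)) : EuclideanSpace ℝ β := WithLp.toLp 2 (fun j => w (Sum.inr j))

/-- The linear map `[[I, 0], [D, I]] : (u, v) ↦ (u, D u + v)` on the sum Euclidean space. -/
noncomputable def shearMap {α β : Type*} [Fintype α] [Fintype β]
    (D : EuclideanSpace ℝ α →L[ℝ] EuclideanSpace ℝ β) :
    EuclideanSpace ℝ (α ⊕ β) →ₗ[ℝ] EuclideanSpace ℝ (α ⊕ β) :=
  { toFun := fun w => emb (p1 w) (D (p1 w) + p2 w)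
    map_add' := by
      intro u v
      have h1 : ∀ w w' : EuclideanSpace ℝ (α ⊕ β), p1 (w + w') = p1 w + p1 w' := fun _ _ => rfl
      ext s
      cases s with
      | inl i => show (u + v) (Sum.inl i) = u (Sum.inl i) + v (Sum.inl i); rfl
      | inr j =>
          show (D (p1 (u + v)) + p2 (u + v)) j = (D (p1 u) + p2 u) j + (D (p1 v) + p2 v) j
          rw [h1, map_add]
          show (D (p1 u)) j + (D (p1 v)) j + ((u (Sum.inr j)) + (v (Sum.inr j))) =
            ((D (p1 u)) j + u (Sum.inr j)) + ((D (p1 v)) j + v (Sum.inr j))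
          ring
    map_smul' := by
      intro c u
      have h1 : p1 (c • u) = c • p1 u := rfl
      ext s
      cases s with
      | inl i => rfl
      | inr j =>
          show (D (p1 (c • u)) + p2 (c • u)) j = c * ((D (p1 u) + p2 u) j)
          rw [h1, map_smul]
          show c * (D (p1 u)) j + c * (u (Sum.inr j)) = c * ((D (p1 u)) j + u (Sum.inr j))
          ring }

/-- The adjoint SC derivative of a graph `S` at `w`. -/
noncomputable def adjSCderivSet {α β : Type*} [Fintype α] [Fintype β]
    (S : Set (EuclideanSpace ℝ (α ⊕ β))) (w : EuclideanSpace ℝ (α ⊕ β)) (d : ℕ) :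
    Set (Submodule ℝ (EuclideanSpace ℝ (β ⊕ α))) :=
  {M | ∃ L ∈ SCderivSet S w d, M = adjSub L}

/-!
The graph of `f + Q` is the image of the graph of `Q` under the `C¹` diffeomorphism
`(u, v) ↦ (u, f u + v)`, whose derivative at `(u, v)` is the shear `[[I, 0], [∇f(u), I]]`.
A `C¹` diffeomorphism maps tangent cones by its derivative, and its derivative depends
continuously on the point, so it transports the whole defining sequences of SC derivatives:
`𝒮(Φ '' S)(Φ w) = Φ'(w) 𝒮S(w)`. For the adjoint formula, `⟪[[I, 0], [D, I]] u, (b, -a)⟫` equals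
`⟪u, (-Dᵀa + b, -a)⟫`, so the annihilator of a sheared subspace is the transposed-sheared
annihilator.
-/

section Shear

variable {α β : Type*} [Fintype α] [Fintype β]

lemma p1_emb (x : EuclideanSpace ℝ α) (y : EuclideanSpace ℝ β) : p1 (emb x y) = x := rfl

lemma emb_p1_p2 (w : EuclideanSpace ℝ (α ⊕ β)) : emb (p1 w) (p2 w) = w := by
  ext s; cases s <;> rfl

lemma shearMap_neg_shearMap (D : EuclideanSpace ℝ α →L[ℝ] EuclideanSpace ℝ β)
    (w : EuclideanSpace ℝ (α ⊕ β)) : shearMap (-D) (shearMap D w) = w := by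
  change emb (p1 w) (-D (p1 w) + (D (p1 w) + p2 w)) = w
  rw [neg_add_cancel_left, emb_p1_p2]

variable (α β) in
noncomputable def p1CLM : EuclideanSpace ℝ (α ⊕ β) →L[ℝ] EuclideanSpace ℝ α :=
  LinearMap.toContinuousLinearMap
    { toFun := p1, map_add' := fun _ _ => rfl, map_smul' := fun _ _ => rfl }

variable (α β) in
noncomputable def inrCLM : EuclideanSpace ℝ β →L[ℝ] EuclideanSpace ℝ (α ⊕ β) :=
  LinearMap.toContinuousLinearMap
    { toFun := emb 0
      map_add' := fun u v => by ext (_ | _) <;> simp [emb]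
      map_smul' := fun c u => by ext (_ | _) <;> simp [emb] }

@[simp] lemma p1CLM_apply (w : EuclideanSpace ℝ (α ⊕ β)) : p1CLM α β w = p1 w := rfl

lemma p1_add_inrCLM (w : EuclideanSpace ℝ (α ⊕ β)) (y : EuclideanSpace ℝ β) :
    p1 (w + inrCLM α β y) = p1 w := by
  ext i; simp [p1, inrCLM, emb]

noncomputable def shearCLM (D : EuclideanSpace ℝ α →L[ℝ] EuclideanSpace ℝ β) :
    EuclideanSpace ℝ (α ⊕ β) →L[ℝ] EuclideanSpace ℝ (α ⊕ β) :=
  .id ℝ _ + (inrCLM α β).comp (D.comp (p1CLM α β))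

lemma coe_shearCLM (D : EuclideanSpace ℝ α →L[ℝ] EuclideanSpace ℝ β) :
    (shearCLM D : EuclideanSpace ℝ (α ⊕ β) →ₗ[ℝ] EuclideanSpace ℝ (α ⊕ β)) = shearMap D := by
  ext w (i | j)
  · simp [shearCLM, shearMap, inrCLM, emb, p1]
  · simp [shearCLM, shearMap, inrCLM, emb, p1, p2, add_comm]

noncomputable def graphShift (g : EuclideanSpace ℝ α → EuclideanSpace ℝ β) :
    EuclideanSpace ℝ (α ⊕ β) ≃ EuclideanSpace ℝ (α ⊕ β) where
  toFun w := w + inrCLM α β (g (p1 w))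
  invFun w := w - inrCLM α β (g (p1 w))
  left_inv w := by simp only [p1_add_inrCLM, add_sub_cancel_right]
  right_inv w := by
    simp only [sub_eq_add_neg, ← map_neg, p1_add_inrCLM]
    rw [map_neg, neg_add_cancel_right]

lemma graphShift_emb (g : EuclideanSpace ℝ α → EuclideanSpace ℝ β) (x : EuclideanSpace ℝ α)
    (y : EuclideanSpace ℝ β) : graphShift g (emb x y) = emb x (g x + y) := by
  ext (i | j)
  · simp [graphShift, inrCLM, emb]
  · simp [graphShift, inrCLM, emb, p1, add_comm]

lemma setOf_emb_add_eq_image_graphShift (Q : EuclideanSpace ℝ α → Set (EuclideanSpace ℝ β))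
    (g : EuclideanSpace ℝ α → EuclideanSpace ℝ β) :
    {w | ∃ x y, y ∈ Q x ∧ w = emb x (g x + y)} =
      graphShift g '' {w | ∃ x y, y ∈ Q x ∧ w = emb x y} := by
  ext w
  constructor
  · rintro ⟨x, y, hy, rfl⟩
    exact ⟨emb x y, ⟨x, y, hy, rfl⟩, graphShift_emb g x y⟩
  · rintro ⟨_, ⟨x, y, hy, rfl⟩, rfl⟩
    exact ⟨x, y, hy, graphShift_emb g x y⟩

lemma contDiff_graphShift {g : EuclideanSpace ℝ α → EuclideanSpace ℝ β} {n : WithTop ℕ∞}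
    (hg : ContDiff ℝ n g) : ContDiff ℝ n (graphShift g) :=
  contDiff_id.add ((inrCLM α β).contDiff.comp (hg.comp (p1CLM α β).contDiff))

lemma contDiff_graphShift_symm {g : EuclideanSpace ℝ α → EuclideanSpace ℝ β} {n : WithTop ℕ∞}
    (hg : ContDiff ℝ n g) : ContDiff ℝ n (graphShift g).symm :=
  contDiff_id.sub ((inrCLM α β).contDiff.comp (hg.comp (p1CLM α β).contDiff))

lemma hasFDerivAt_graphShift {g : EuclideanSpace ℝ α → EuclideanSpace ℝ β}
    {D : EuclideanSpace ℝ α →L[ℝ] EuclideanSpace ℝ β} {w : EuclideanSpace ℝ (α ⊕ β)}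
    (hg : HasFDerivAt g D (p1 w)) : HasFDerivAt (graphShift g) (shearCLM D) w :=
  (hasFDerivAt_id w).add ((inrCLM α β).hasFDerivAt.comp w (hg.comp w (p1CLM α β).hasFDerivAt))

end Shear

section Calculus

variable {E F : Type*} [NormedAddCommGroup E] [NormedSpace ℝ E]
  [NormedAddCommGroup F] [NormedSpace ℝ F]

lemma tendsto_clm_apply {γ : Type*} {l : Filter γ} {T : γ → E →L[ℝ] F} {T₀ : E →L[ℝ] F}
    {x : γ → E} {x₀ : E} (hT : Tendsto T l (𝓝 T₀)) (hx : Tendsto x l (𝓝 x₀)) :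
    Tendsto (fun k => T k (x k)) l (𝓝 (T₀ x₀)) :=
  (isBoundedBilinearMap_apply.continuous.tendsto (T₀, x₀)).comp (hT.prodMk_nhds hx)

lemma fderiv_comp_fderiv_symm (e : E ≃ F) (he : Differentiable ℝ e)
    (he' : Differentiable ℝ e.symm) (x : E) :
    (fderiv ℝ e x).comp (fderiv ℝ e.symm (e x)) = .id ℝ F := by
  have hcomp := (he (e.symm (e x))).hasFDerivAt.comp (e x) (he' (e x)).hasFDerivAt
  rw [e.self_comp_symm, e.symm_apply_apply] at hcomp
  exact hcomp.unique (hasFDerivAt_id (e x))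

lemma injective_fderiv_of_equiv (e : E ≃ F) (he : Differentiable ℝ e)
    (he' : Differentiable ℝ e.symm) (x : E) : Function.Injective (fderiv ℝ e x) := by
  have hinv := fderiv_comp_fderiv_symm e.symm he' (by simpa using he) (e x)
  simp only [Equiv.symm_symm, Equiv.symm_apply_apply] at hinv
  exact Function.LeftInverse.injective (g := fderiv ℝ e.symm (e x)) fun u => congr($hinv u)

lemma tangentConeAt_image_equiv (e : E ≃ F) {S : Set E} {x : E} {A : E →L[ℝ] F}
    {B : F →L[ℝ] E} (hA : HasFDerivAt e A x) (hB : HasFDerivAt e.symm B (e x))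
    (hAB : A.comp B = .id ℝ F) :
    tangentConeAt ℝ (e '' S) (e x) = A '' tangentConeAt ℝ S x := by
  refine Subset.antisymm (fun v hv => ⟨B v, ?_, congr($hAB v)⟩)
    hA.hasFDerivWithinAt.mapsTo_tangent_cone.image_subset
  have hBv := (hB.hasFDerivWithinAt (s := e '' S)).mapsTo_tangent_cone hv
  rwa [e.symm_image_image, e.symm_apply_apply] at hBv

end Calculus

section Projection

variable {ι : Type*} [Fintype ι]

local notation "𝔼" => EuclideanSpace ℝ ι

lemma projCLM_eq_starProjection (L : Submodule ℝ 𝔼) : projCLM L = L.starProjection := rfl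

lemma tendsto_projCLM_iff {M : ℕ → Submodule ℝ 𝔼} {N : Submodule ℝ 𝔼} :
    Tendsto (fun k => projCLM (M k)) atTop (𝓝 (projCLM N)) ↔
      Tendsto (fun k => dZ (M k) N) atTop (𝓝 0) :=
  tendsto_iff_norm_sub_tendsto_zero

lemma eq_projCLM_range_of_tendsto {M : ℕ → Submodule ℝ 𝔼} {R : 𝔼 →L[ℝ] 𝔼}
    (h : Tendsto (fun k => projCLM (M k)) atTop (𝓝 R)) : R = projCLM R.range := by
  have hidem : IsIdempotentElem R := by
    refine tendsto_nhds_unique (h.mul h) ?_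
    simpa only [projCLM_eq_starProjection, (M _).isIdempotentElem_starProjection.eq] using h
  have hsa : IsSelfAdjoint R := by
    refine ContinuousLinearMap.isSelfAdjoint_iff'.mpr (tendsto_nhds_unique
      ((ContinuousLinearMap.adjoint.continuous.tendsto R).comp h) ?_)
    simpa only [Function.comp_def, projCLM_eq_starProjection,
      (isSelfAdjoint_starProjection (M _)).adjoint_eq] using h
  obtain ⟨_, hR⟩ := isStarProjection_iff_eq_starProjection_range.mp ⟨hidem, hsa⟩
  exact hR

lemma trace_projCLM (L : Submodule ℝ 𝔼) :
    LinearMap.trace ℝ 𝔼 (projCLM L) = finrank ℝ L :=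
  LinearMap.IsProj.trace ⟨L.starProjection_apply_mem, fun _ => L.starProjection_eq_self_iff.mpr⟩

lemma finrank_eq_of_tendsto_projCLM {d : ℕ} {M : ℕ → Submodule ℝ 𝔼} {N : Submodule ℝ 𝔼}
    (hM : ∀ k, finrank ℝ (M k) = d) (h : Tendsto (fun k => projCLM (M k)) atTop (𝓝 (projCLM N))) :
    finrank ℝ N = d := by
  have htrace : Continuous fun T : 𝔼 →L[ℝ] 𝔼 => LinearMap.trace ℝ 𝔼 T :=
    LinearMap.continuous_of_finiteDimensional
      ((LinearMap.trace ℝ 𝔼).comp (ContinuousLinearMap.coeLM ℝ))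
  have hlim := (htrace.tendsto _).comp h
  simp only [Function.comp_def, trace_projCLM, hM] at hlim
  exact_mod_cast tendsto_nhds_unique hlim tendsto_const_nhds

lemma mem_of_tendsto_projCLM {M : ℕ → Submodule ℝ 𝔼} {N : Submodule ℝ 𝔼} {x : ℕ → 𝔼} {x₀ : 𝔼}
    (h : Tendsto (fun k => projCLM (M k)) atTop (𝓝 (projCLM N))) (hx : ∀ k, x k ∈ M k)
    (hx₀ : Tendsto x atTop (𝓝 x₀)) : x₀ ∈ N := by
  have hlim := tendsto_clm_apply h hx₀
  simp only [projCLM_eq_starProjection, (M _).starProjection_eq_self_iff.mpr (hx _)] at hlim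
  exact N.starProjection_eq_self_iff.mp (tendsto_nhds_unique hlim hx₀)

/-- Any cluster point of the projections onto `A k '' L k` is an orthogonal projection (a limit
of self-adjoint idempotents) of rank `d` (the trace is continuous) whose range contains
`A₀ '' L₀`; so it is the projection onto `A₀ '' L₀`. -/
lemma tendsto_dZ_map {d : ℕ} {A : ℕ → 𝔼 →L[ℝ] 𝔼} {A₀ : 𝔼 →L[ℝ] 𝔼}
    {L : ℕ → Submodule ℝ 𝔼} {L₀ : Submodule ℝ 𝔼}
    (hA : Tendsto A atTop (𝓝 A₀)) (hL : Tendsto (fun k => dZ (L k) L₀) atTop (𝓝 0))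
    (hd : ∀ k, finrank ℝ ((L k).map (A k : 𝔼 →ₗ[ℝ] 𝔼)) = d)
    (hd₀ : finrank ℝ (L₀.map (A₀ : 𝔼 →ₗ[ℝ] 𝔼)) = d) :
    Tendsto (fun k => dZ ((L k).map (A k : 𝔼 →ₗ[ℝ] 𝔼)) (L₀.map (A₀ : 𝔼 →ₗ[ℝ] 𝔼))) atTop
      (𝓝 0) := by
  rw [← tendsto_projCLM_iff] at hL ⊢
  refine tendsto_of_subseq_tendsto fun φ hφ => ?_
  obtain ⟨R, -, ψ, hψ, hR⟩ := (isCompact_closedBall (0 : 𝔼 →L[ℝ] 𝔼) 1).tendsto_subseq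
    (x := fun k => projCLM ((L (φ k)).map (A (φ k) : 𝔼 →ₗ[ℝ] 𝔼)))
    fun k => by simpa [projCLM_eq_starProjection] using Submodule.starProjection_norm_le _
  refine ⟨ψ, ?_⟩
  have hRN := eq_projCLM_range_of_tendsto hR
  set N := R.range
  rw [hRN] at hR
  have hle : L₀.map (A₀ : 𝔼 →ₗ[ℝ] 𝔼) ≤ N := by
    rintro _ ⟨u, hu, rfl⟩
    have hlim := tendsto_clm_apply hA (tendsto_clm_apply hL (tendsto_const_nhds (x := u)))
    rw [projCLM_eq_starProjection, L₀.starProjection_eq_self_iff.mpr hu] at hlim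
    exact mem_of_tendsto_projCLM hR (fun k => ⟨_, (L _).starProjection_apply_mem u, rfl⟩)
      (hlim.comp (hφ.comp hψ.tendsto_atTop))
  rw [Submodule.eq_of_le_of_finrank_eq hle
    (by rw [hd₀, finrank_eq_of_tendsto_projCLM (fun k => hd _) hR])]
  exact hR

end Projection

section SCImage

variable {ι : Type*} [Fintype ι]

local notation "𝔼" => EuclideanSpace ℝ ι

lemma mem_SCderivSet_image (e : 𝔼 ≃ 𝔼) (he : ContDiff ℝ 1 e) (he' : ContDiff ℝ 1 e.symm)
    {S : Set 𝔼} {w : 𝔼} {d : ℕ} {L : Submodule ℝ 𝔼} (hL : L ∈ SCderivSet S w d) :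
    L.map (fderiv ℝ e w : 𝔼 →ₗ[ℝ] 𝔼) ∈ SCderivSet (e '' S) (e w) d := by
  obtain ⟨hLd, wk, Lk, hk, hwk, hLk⟩ := hL
  have hdiff := he.differentiable one_ne_zero
  have hdiff' := he'.differentiable one_ne_zero
  have finrank_map (x : 𝔼) (M : Submodule ℝ 𝔼) :
      finrank ℝ (M.map (fderiv ℝ e x : 𝔼 →ₗ[ℝ] 𝔼)) = finrank ℝ M :=
    (Submodule.equivMapOfInjective _ (injective_fderiv_of_equiv e hdiff hdiff' x) M).finrank_eq.symm
  refine ⟨by rw [finrank_map, hLd], fun k => e (wk k),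
    fun k => (Lk k).map (fderiv ℝ e (wk k) : 𝔼 →ₗ[ℝ] 𝔼), fun k => ⟨mem_image_of_mem _ (hk k).1,
      by rw [finrank_map, (hk k).2.1], ?_⟩, (he.continuous.tendsto w).comp hwk, ?_⟩
  · rw [Submodule.map_coe, (hk k).2.2, tangentConeAt_image_equiv e (hdiff _).hasFDerivAt
      (hdiff' _).hasFDerivAt (fderiv_comp_fderiv_symm e hdiff hdiff' _)]
    rfl
  · exact tendsto_dZ_map (((he.continuous_fderiv one_ne_zero).tendsto w).comp hwk) hLk
      (fun k => by rw [finrank_map, (hk k).2.1]) (by rw [finrank_map, hLd])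

theorem SCderivSet_image (e : 𝔼 ≃ 𝔼) (he : ContDiff ℝ 1 e) (he' : ContDiff ℝ 1 e.symm)
    (S : Set 𝔼) (w : 𝔼) (d : ℕ) :
    SCderivSet (e '' S) (e w) d = Submodule.map (fderiv ℝ e w : 𝔼 →ₗ[ℝ] 𝔼) '' SCderivSet S w d := by
  refine Subset.antisymm (fun L hL => ?_)
    (image_subset_iff.mpr fun L => mem_SCderivSet_image e he he')
  have hL' := mem_SCderivSet_image e.symm he' (by simpa using he) hL
  rw [e.symm_image_image, e.symm_apply_apply] at hL'
  refine ⟨_, hL', ?_⟩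
  rw [← Submodule.map_comp, ← ContinuousLinearMap.toLinearMap_comp,
    fderiv_comp_fderiv_symm e (he.differentiable one_ne_zero) (he'.differentiable one_ne_zero),
    ContinuousLinearMap.coe_id, Submodule.map_id]

end SCImage

section Adjoint

variable {α β : Type*} [Fintype α] [Fintype β]

noncomputable def shearEquiv (D : EuclideanSpace ℝ α →L[ℝ] EuclideanSpace ℝ β) :
    EuclideanSpace ℝ (α ⊕ β) ≃ₗ[ℝ] EuclideanSpace ℝ (α ⊕ β) :=
  .ofLinearMap (shearMap D) (shearMap (-D))
    (LinearMap.ext fun w => by simpa using shearMap_neg_shearMap (-D) w)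
    (LinearMap.ext (shearMap_neg_shearMap D))

lemma coe_shearEquiv (D : EuclideanSpace ℝ α →L[ℝ] EuclideanSpace ℝ β) :
    (shearEquiv D : EuclideanSpace ℝ (α ⊕ β) →ₗ[ℝ] EuclideanSpace ℝ (α ⊕ β)) = shearMap D := rfl

lemma shearEquiv_symm_apply (D : EuclideanSpace ℝ α →L[ℝ] EuclideanSpace ℝ β)
    (w : EuclideanSpace ℝ (α ⊕ β)) : (shearEquiv D).symm w = shearMap (-D) w := rfl

lemma inner_eq_inner_p1_add_inner_p2 (x y : EuclideanSpace ℝ (α ⊕ β)) :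
    inner ℝ x y = inner ℝ (p1 x) (p1 y) + inner ℝ (p2 x) (p2 y) := by
  simp only [PiLp.inner_apply, Fintype.sum_sum_type]
  rfl

lemma inner_shearMap_swapNeg (D : EuclideanSpace ℝ α →L[ℝ] EuclideanSpace ℝ β)
    (u : EuclideanSpace ℝ (α ⊕ β)) (w : EuclideanSpace ℝ (β ⊕ α)) :
    inner ℝ (shearMap D u) (swapNeg α β w) =
      inner ℝ u (swapNeg α β (shearMap (-D.adjoint) w)) := by
  simp only [inner_eq_inner_p1_add_inner_p2]
  change inner ℝ (p1 u) (p2 w) + inner ℝ (D (p1 u) + p2 u) (-p1 w) =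
    inner ℝ (p1 u) (-D.adjoint (p1 w) + p2 w) + inner ℝ (p2 u) (-p1 w)
  simp only [inner_add_left, inner_add_right, inner_neg_right,
    ContinuousLinearMap.adjoint_inner_right]
  ring

lemma adjSub_map_shearMap (D : EuclideanSpace ℝ α →L[ℝ] EuclideanSpace ℝ β)
    (L : Submodule ℝ (EuclideanSpace ℝ (α ⊕ β))) :
    adjSub (L.map (shearMap D)) = (adjSub L).map (shearMap D.adjoint) := by
  ext w
  rw [← coe_shearEquiv D.adjoint, Submodule.mem_map_equiv, shearEquiv_symm_apply]
  simp only [adjSub, Submodule.mem_comap, Submodule.mem_orthogonal, Submodule.mem_map,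
    forall_exists_index, and_imp, forall_apply_eq_imp_iff₂, inner_shearMap_swapNeg]

lemma adjSCderivSet_eq_image (S : Set (EuclideanSpace ℝ (α ⊕ β))) (w : EuclideanSpace ℝ (α ⊕ β))
    (d : ℕ) : adjSCderivSet S w d = adjSub '' SCderivSet S w d := by
  ext M
  simp only [adjSCderivSet, Set.mem_ofPred_eq, mem_image, eq_comm]

lemma adjSCderivSet_eq_image_of_SCderivSet_eq {S S' : Set (EuclideanSpace ℝ (α ⊕ β))}
    {w w' : EuclideanSpace ℝ (α ⊕ β)} {d : ℕ} {D : EuclideanSpace ℝ α →L[ℝ] EuclideanSpace ℝ β}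
    (h : SCderivSet S' w' d = Submodule.map (shearMap D) '' SCderivSet S w d) :
    adjSCderivSet S' w' d = Submodule.map (shearMap D.adjoint) '' adjSCderivSet S w d := by
  rw [adjSCderivSet_eq_image, adjSCderivSet_eq_image, h, image_image, image_image]
  exact image_congr fun L _ => adjSub_map_shearMap D L

end Adjoint

lemma SCderivSet_graphShift_image {α β : Type*} [Fintype α] [Fintype β]
    {g : EuclideanSpace ℝ α → EuclideanSpace ℝ β} (hg : ContDiff ℝ 1 g)
    (S : Set (EuclideanSpace ℝ (α ⊕ β))) (w : EuclideanSpace ℝ (α ⊕ β)) (d : ℕ) :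
    SCderivSet (graphShift g '' S) (graphShift g w) d =
      Submodule.map (shearMap (fderiv ℝ g (p1 w))) '' SCderivSet S w d := by
  rw [SCderivSet_image _ (contDiff_graphShift hg) (contDiff_graphShift_symm hg),
    (hasFDerivAt_graphShift (hg.differentiable one_ne_zero _).hasFDerivAt).fderiv, coe_shearCLM]

theorem scderiv_sum_rule_general {n m : ℕ}
    (Q : EuclideanSpace ℝ (Fin n ⊕ Fin m) → Set (EuclideanSpace ℝ (Fin m)))
    (f : EuclideanSpace ℝ (Fin n ⊕ Fin m) → EuclideanSpace ℝ (Fin m))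
    (hf : ContDiff ℝ 1 f)
    (b : EuclideanSpace ℝ (Fin n ⊕ Fin m)) (z : EuclideanSpace ℝ (Fin m))
    (hSCD : (SCderivSet {w | ∃ b' z', z' ∈ Q b' ∧ w = emb b' z'} (emb b z) (n + m)).Nonempty) :
    (SCderivSet {w | ∃ b' z', z' ∈ Q b' ∧ w = emb b' (f b' + z')}
        (emb b (f b + z)) (n + m)).Nonempty ∧
    SCderivSet {w | ∃ b' z', z' ∈ Q b' ∧ w = emb b' (f b' + z')} (emb b (f b + z)) (n + m)
      = (Submodule.map (shearMap (fderiv ℝ f b))) ''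
          (SCderivSet {w | ∃ b' z', z' ∈ Q b' ∧ w = emb b' z'} (emb b z) (n + m)) ∧
    adjSCderivSet {w | ∃ b' z', z' ∈ Q b' ∧ w = emb b' (f b' + z')} (emb b (f b + z)) (n + m)
      = (Submodule.map (shearMap (ContinuousLinearMap.adjoint (fderiv ℝ f b)))) ''
          (adjSCderivSet {w | ∃ b' z', z' ∈ Q b' ∧ w = emb b' z'} (emb b z) (n + m)) := by
  have hSC : SCderivSet {w | ∃ b' z', z' ∈ Q b' ∧ w = emb b' (f b' + z')} (emb b (f b + z))
      (n + m) = Submodule.map (shearMap (fderiv ℝ f b)) ''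
        SCderivSet {w | ∃ b' z', z' ∈ Q b' ∧ w = emb b' z'} (emb b z) (n + m) := by
    rw [setOf_emb_add_eq_image_graphShift, ← graphShift_emb, SCderivSet_graphShift_image hf, p1_emb]
  exact ⟨hSC ▸ hSCD.image _, hSC, adjSCderivSet_eq_image_of_SCderivSet_eq hSC⟩

/-- Lemma 2.16: SC derivatives of `F = f + Q`. If `Q` has the SCD property at `((x,y), z)` and
`f` is `C¹`, then `F = f + Q` has the SCD property at `((x,y), f(x,y) + z)`, with
`𝒮F = {[[I,0],[∇f,I]]·L | L ∈ 𝒮Q}` and `𝒮*F = {[[I,0],[∇fᵀ,I]]·L* | L* ∈ 𝒮*Q}`.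
Here the base variable `(x, y) ∈ ℝⁿ × ℝᵐ` is modelled on the index type `Fin n ⊕ Fin m`. -/
theorem scderiv_sum_rule {n m : ℕ}
    (Q : EuclideanSpace ℝ (Fin n ⊕ Fin m) → Set (EuclideanSpace ℝ (Fin m)))
    (hQ : IsClosed {w : EuclideanSpace ℝ ((Fin n ⊕ Fin m) ⊕ Fin m) |
        ∃ b z', z' ∈ Q b ∧ w = emb b z'})
    (f : EuclideanSpace ℝ (Fin n ⊕ Fin m) → EuclideanSpace ℝ (Fin m))
    (hf : ContDiff ℝ 1 f)
    (b : EuclideanSpace ℝ (Fin n ⊕ Fin m)) (z : EuclideanSpace ℝ (Fin m)) (hz : z ∈ Q b)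
    (hSCD : (SCderivSet {w | ∃ b' z', z' ∈ Q b' ∧ w = emb b' z'} (emb b z) (n + m)).Nonempty) :
    (SCderivSet {w | ∃ b' z', z' ∈ Q b' ∧ w = emb b' (f b' + z')}
        (emb b (f b + z)) (n + m)).Nonempty ∧
    SCderivSet {w | ∃ b' z', z' ∈ Q b' ∧ w = emb b' (f b' + z')} (emb b (f b + z)) (n + m)
      = (Submodule.map (shearMap (fderiv ℝ f b))) ''
          (SCderivSet {w | ∃ b' z', z' ∈ Q b' ∧ w = emb b' z'} (emb b z) (n + m)) ∧
    adjSCderivSet {w | ∃ b' z', z' ∈ Q b' ∧ w = emb b' (f b' + z')} (emb b (f b + z)) (n + m)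
      = (Submodule.map (shearMap (ContinuousLinearMap.adjoint (fderiv ℝ f b)))) ''
          (adjSCderivSet {w | ∃ b' z', z' ∈ Q b' ∧ w = emb b' z'} (emb b z) (n + m)) :=
  scderiv_sum_rule_general Q f hf b z hSCD
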